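/- Let a_0, a_1, a_2, a_3 be binary sequences of odd length n, let e(0), e(1), e(2) ∈ {0,1}, and let u be the quaternary sequence of length N = 2n generated by Construction I. Suppose that: (i) R_{a_0}(τ_0)+R_{a_1}(τ_0)+R_{a_2}(τ_0)+R_{a_3}(τ_0) ∈ {0, 4, −4} for all 1 ≤ τ_0 < n; (ii) R_{a_0,a_2}(τ_0) − R_{a_2,a_0}(τ_0) + (−1)^{e(0)+e(1)+e(2)}(R_{a_1,a_3}(τ_0) − R_{a_3,a_1}(τ_0)) = 0 for all 1 ≤ τ_0 < n; (iii) R_{a_0,a_1}(τ_0) + R_{a_1,a_0}(τ_0) + (−1)^{e(0)+e(1)+e(2)}(R_{a_2,a_3}(τ_0) + R_{a_3,a_2}(τ_0)) ∈ {0, 4, −4} for all 0 ≤ τ_0 < n; and (iv) R_{a_0,a_3}(τ_0) − R_{a_3,a_0}(τ_0) + (−1)^{e(0)+e(1)+e(2)}(R_{a_1,a_2}(τ_0) − R_{a_2,a_1}(τ_0)) = 0 for all 0 ≤ τ_0 < n. Then R_u(τ) ∈ {0, 2, −2} for all 1 ≤ τ < N. -/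

import Mathlib

/-- Cross-correlation of two sequences of length `N` over `ℤ_H`, with `ξ = exp(2πi/H)`. -/
noncomputable def crossCorr (H N : ℕ) (s t : ZMod N → ZMod H) (τ : ZMod N) : ℂ :=
  ∑ i ∈ Finset.range N,
    Complex.exp (2 * (Real.pi : ℂ) * Complex.I / (H : ℂ)) ^ ((s (i : ZMod N) - t ((i : ZMod N) + τ)).val)

/-- Cross-correlation of two binary sequences of length `N` (an integer). -/
def binCorr (N : ℕ) (s t : ZMod N → ZMod 2) (τ : ZMod N) : ℤ :=
  ∑ i ∈ Finset.range N, (-1 : ℤ) ^ ((s (i : ZMod N) + t ((i : ZMod N) + τ)).val)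

/-- Cross-correlation of two quaternary sequences of length `N`, with `ξ = √-1`. -/
noncomputable def quadCorr (N : ℕ) (s t : ZMod N → ZMod 4) (τ : ZMod N) : ℂ :=
  ∑ i ∈ Finset.range N, Complex.I ^ ((s (i : ZMod N) - t ((i : ZMod N) + τ)).val)

/-- Interleaving `u = I(a, b)`: `u(2i) = a(i)`, `u(2i+1) = b(i)`. -/
def interleaveSeq {H : ℕ} (n : ℕ) (a b : ZMod n → ZMod H) : ZMod (2 * n) → ZMod H :=
  fun k => if k.val % 2 = 0 then a ((k.val / 2 : ℕ) : ZMod n) else b ((k.val / 2 : ℕ) : ZMod n)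

/-- The inverse Gray mapping `φ⁻¹ : ℤ₂ × ℤ₂ → ℤ₄`. -/
def grayInv (a b : ZMod 2) : ZMod 4 :=
  if a = 0 then (if b = 0 then 0 else 1) else (if b = 0 then 3 else 2)

/-- Construction I: the quaternary sequence of length `2n` built from
`a₀, a₁, a₂, a₃` and bits `e₀, e₁, e₂`. -/
def constructionI (n : ℕ) (a0 a1 a2 a3 : ZMod n → ZMod 2)
    (e0 e1 e2 : ZMod 2) : ZMod (2 * n) → ZMod 4 :=
  let lam : ZMod n := (((n + 1) / 2 : ℕ) : ZMod n)
  let c := interleaveSeq n a0 (fun i => e0 + a1 (i + lam))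
  let d := interleaveSeq n (fun i => e1 + a2 i) (fun i => e2 + a3 (i + lam))
  fun i => grayInv (c i) (d i)

/-!
With `ξ = i` a case check gives
`2 i ^ (φ⁻¹(x,y) - φ⁻¹(x',y')) = (-1)^(x+x') + (-1)^(y+y') + i ((-1)^(x+y') - (-1)^(y+x'))`,
so `2 R_u = R_c + R_d + i (R_{c,d} - R_{d,c})`. For interleaved sequences a shift `2τ₀`
correlates each half with itself at shift `τ₀`, while a shift `2τ₀ + 1` correlates the two halves
at shifts `τ₀` and `τ₀ + 1`; as `2λ = 1` in `ℤ_n`, the shift by `λ` in Construction I turns both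
of the latter into the shift `τ₀ + λ`. Pulling out the signs `(-1)^e(k)`, the real part of
`2 R_u(τ)` becomes `±` the sum in (i) or (iii) and the imaginary part `±` the expression in
(ii) or (iv).
-/

open Finset

lemma I_pow_grayInv_sub (x y x' y' : ZMod 2) :
    Complex.I ^ (grayInv x y - grayInv x' y').val =
      ((-1) ^ (x + x').val + (-1) ^ (y + y').val
        + Complex.I * ((-1) ^ (x + y').val - (-1) ^ (y + x').val)) / 2 := by
  obtain rfl | rfl : x = 0 ∨ x = 1 := by decide +revert
  all_goals obtain rfl | rfl : y = 0 ∨ y = 1 := by decide +revert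
  all_goals obtain rfl | rfl : x' = 0 ∨ x' = 1 := by decide +revert
  all_goals obtain rfl | rfl : y' = 0 ∨ y' = 1 := by decide +revert
  all_goals norm_num [grayInv, ZMod.val_one_eq_one_mod, ZMod.val_ofNat, ZMod.neg_val', pow_succ]
    <;> ring

lemma quadCorr_grayInv {N : ℕ} (c d : ZMod N → ZMod 2) (τ : ZMod N) :
    quadCorr N (fun i => grayInv (c i) (d i)) (fun i => grayInv (c i) (d i)) τ =
      (((binCorr N c c τ + binCorr N d d τ : ℤ) : ℂ)
        + Complex.I * ((binCorr N c d τ - binCorr N d c τ : ℤ) : ℂ)) / 2 := by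
  simp only [quadCorr, binCorr, I_pow_grayInv_sub, ← sum_div, Int.cast_add, Int.cast_sub,
    Int.cast_sum, Int.cast_pow, Int.cast_neg, Int.cast_one, sum_add_distrib, ← mul_sum,
    sum_sub_distrib]

lemma neg_one_pow_val_add (x y : ZMod 2) :
    (-1 : ℤ) ^ (x + y).val = (-1) ^ x.val * (-1) ^ y.val := by
  decide +revert

lemma neg_one_pow_mul_self (k : ℕ) : (-1 : ℤ) ^ k * (-1) ^ k = 1 := by
  rw [← mul_pow, neg_one_mul, neg_neg, one_pow]

lemma sum_range_two_mul {M : Type*} [AddCommMonoid M] (n : ℕ) (f : ℕ → M) :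
    ∑ i ∈ range (2 * n), f i = ∑ j ∈ range n, (f (2 * j) + f (2 * j + 1)) := by
  induction n with
  | zero => simp
  | succ m ih =>
    rw [Nat.mul_succ, sum_range_succ, sum_range_succ, sum_range_succ, ih, add_assoc]

lemma natCast_half_succ_add_self {n : ℕ} (hn : Odd n) :
    (((n + 1) / 2 : ℕ) : ZMod n) + (((n + 1) / 2 : ℕ) : ZMod n) = 1 := by
  obtain ⟨k, rfl⟩ := hn
  rw [← Nat.cast_add, show (2 * k + 1 + 1) / 2 + (2 * k + 1 + 1) / 2 = 2 * k + 1 + 1 by omega,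
    Nat.cast_succ, ZMod.natCast_self, zero_add]

lemma interleaveSeq_natCast {H n : ℕ} (a b : ZMod n → ZMod H) (m : ℕ) :
    interleaveSeq n a b m = if m % 2 = 0 then a (m / 2 : ℕ) else b (m / 2 : ℕ) := by
  rw [interleaveSeq, ZMod.val_natCast, Nat.mod_mul_right_mod, Nat.mod_mul_right_div_self,
    ZMod.natCast_mod]

lemma interleaveSeq_natCast_two_mul {H n : ℕ} (a b : ZMod n → ZMod H) (j : ℕ) :
    interleaveSeq n a b ((2 * j : ℕ) : ZMod (2 * n)) = a j := by
  rw [interleaveSeq_natCast]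
  simp

lemma interleaveSeq_natCast_two_mul_add_one {H n : ℕ} (a b : ZMod n → ZMod H) (j : ℕ) :
    interleaveSeq n a b ((2 * j + 1 : ℕ) : ZMod (2 * n)) = b j := by
  rw [interleaveSeq_natCast]
  simp [Nat.mul_add_div]

section BinCorr

variable {n : ℕ} (p q : ZMod n → ZMod 2)

lemma binCorr_eq_sum_univ [NeZero n] (τ : ZMod n) :
    binCorr n p q τ = ∑ x : ZMod n, (-1 : ℤ) ^ (p x + q (x + τ)).val :=
  sum_nbij' (fun i => (i : ZMod n)) ZMod.val (fun _ _ => mem_univ _)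
    (fun x _ => mem_range.2 x.val_lt) (fun _ hi => ZMod.val_natCast_of_lt (mem_range.1 hi))
    (fun x _ => ZMod.natCast_zmod_val x) (fun _ _ => rfl)

lemma binCorr_const_add_left (e : ZMod 2) (τ : ZMod n) :
    binCorr n (fun i => e + p i) q τ = (-1) ^ e.val * binCorr n p q τ := by
  simp only [binCorr, mul_sum, add_assoc, neg_one_pow_val_add]

lemma binCorr_const_add_right (e : ZMod 2) (τ : ZMod n) :
    binCorr n p (fun i => e + q i) τ = (-1) ^ e.val * binCorr n p q τ := by
  simp only [binCorr, mul_sum, add_left_comm _ e, neg_one_pow_val_add]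

lemma binCorr_comp_add_right (μ τ : ZMod n) :
    binCorr n p (fun i => q (i + μ)) τ = binCorr n p q (τ + μ) := by
  simp only [binCorr, add_assoc]

lemma binCorr_comp_add_left [NeZero n] (μ τ : ZMod n) :
    binCorr n (fun i => p (i + μ)) q τ = binCorr n p q (τ - μ) := by
  rw [binCorr_eq_sum_univ, binCorr_eq_sum_univ]
  exact Fintype.sum_equiv (Equiv.addRight μ) _ _ fun x => by simp [add_assoc]

variable (r w : ZMod n → ZMod 2) (τ : ℕ)

lemma binCorr_interleaveSeq_two_mul :
    binCorr (2 * n) (interleaveSeq n p q) (interleaveSeq n r w) ((2 * τ : ℕ) : ZMod (2 * n)) =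
      binCorr n p r τ + binCorr n q w τ := by
  rw [binCorr, sum_range_two_mul, binCorr, binCorr, ← sum_add_distrib]
  refine sum_congr rfl fun j _ => ?_
  rw [← Nat.cast_add, ← Nat.cast_add, show 2 * j + 2 * τ = 2 * (j + τ) by ring,
    show 2 * j + 1 + 2 * τ = 2 * (j + τ) + 1 by ring,
    interleaveSeq_natCast_two_mul, interleaveSeq_natCast_two_mul,
    interleaveSeq_natCast_two_mul_add_one, interleaveSeq_natCast_two_mul_add_one]
  simp only [Nat.cast_add]

lemma binCorr_interleaveSeq_two_mul_add_one :
    binCorr (2 * n) (interleaveSeq n p q) (interleaveSeq n r w)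
        ((2 * τ + 1 : ℕ) : ZMod (2 * n)) =
      binCorr n p w τ + binCorr n q r (τ + 1) := by
  rw [binCorr, sum_range_two_mul, binCorr, binCorr, ← sum_add_distrib]
  refine sum_congr rfl fun j _ => ?_
  rw [← Nat.cast_add, ← Nat.cast_add, show 2 * j + (2 * τ + 1) = 2 * (j + τ) + 1 by ring,
    show 2 * j + 1 + (2 * τ + 1) = 2 * (j + τ + 1) by ring,
    interleaveSeq_natCast_two_mul, interleaveSeq_natCast_two_mul,
    interleaveSeq_natCast_two_mul_add_one, interleaveSeq_natCast_two_mul_add_one]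
  simp only [Nat.cast_add, Nat.cast_one, add_assoc]

end BinCorr

/-- The binary sequences `c` (this one) and `d` (`dSeq`) of Construction I, with `λ` replaced
by an arbitrary shift `μ`. -/
def cSeq (n : ℕ) (a0 a1 : ZMod n → ZMod 2) (e0 : ZMod 2) (μ : ZMod n) : ZMod (2 * n) → ZMod 2 :=
  interleaveSeq n a0 (fun i => e0 + a1 (i + μ))

def dSeq (n : ℕ) (a2 a3 : ZMod n → ZMod 2) (e1 e2 : ZMod 2) (μ : ZMod n) :
    ZMod (2 * n) → ZMod 2 :=
  interleaveSeq n (fun i => e1 + a2 i) (fun i => e2 + a3 (i + μ))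

section ConstructionI

variable {n : ℕ} (a0 a1 a2 a3 : ZMod n → ZMod 2) (e0 e1 e2 : ZMod 2) (μ : ZMod n) (τ : ℕ)

lemma constructionI_eq_grayInv :
    constructionI n a0 a1 a2 a3 e0 e1 e2 = fun i =>
      grayInv (cSeq n a0 a1 e0 (((n + 1) / 2 : ℕ) : ZMod n) i)
        (dSeq n a2 a3 e1 e2 (((n + 1) / 2 : ℕ) : ZMod n) i) :=
  rfl

variable [NeZero n]

lemma binCorr_cSeq_add_binCorr_dSeq_two_mul :
    binCorr (2 * n) (cSeq n a0 a1 e0 μ) (cSeq n a0 a1 e0 μ) ((2 * τ : ℕ) : ZMod (2 * n)) +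
        binCorr (2 * n) (dSeq n a2 a3 e1 e2 μ) (dSeq n a2 a3 e1 e2 μ) ((2 * τ : ℕ) : ZMod (2 * n)) =
      binCorr n a0 a0 τ + binCorr n a1 a1 τ + binCorr n a2 a2 τ + binCorr n a3 a3 τ := by
  simp only [cSeq, dSeq, binCorr_interleaveSeq_two_mul, binCorr_const_add_left,
    binCorr_const_add_right, binCorr_comp_add_left, binCorr_comp_add_right, add_sub_cancel_right]
  linear_combination binCorr n a1 a1 τ * neg_one_pow_mul_self e0.val
    + binCorr n a2 a2 τ * neg_one_pow_mul_self e1.val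
    + binCorr n a3 a3 τ * neg_one_pow_mul_self e2.val

lemma binCorr_cSeq_dSeq_sub_two_mul :
    binCorr (2 * n) (cSeq n a0 a1 e0 μ) (dSeq n a2 a3 e1 e2 μ) ((2 * τ : ℕ) : ZMod (2 * n)) -
        binCorr (2 * n) (dSeq n a2 a3 e1 e2 μ) (cSeq n a0 a1 e0 μ) ((2 * τ : ℕ) : ZMod (2 * n)) =
      (-1) ^ e1.val * (binCorr n a0 a2 τ - binCorr n a2 a0 τ +
        (-1) ^ (e0 + e1 + e2).val * (binCorr n a1 a3 τ - binCorr n a3 a1 τ)) := by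
  simp only [cSeq, dSeq, binCorr_interleaveSeq_two_mul, binCorr_const_add_left,
    binCorr_const_add_right, binCorr_comp_add_left, binCorr_comp_add_right, add_sub_cancel_right,
    neg_one_pow_val_add]
  linear_combination -(-1) ^ e0.val * (-1) ^ e2.val * (binCorr n a1 a3 τ - binCorr n a3 a1 τ) *
    neg_one_pow_mul_self e1.val

variable {μ}

lemma binCorr_cSeq_add_binCorr_dSeq_two_mul_add_one (hμ : μ + μ = 1) :
    binCorr (2 * n) (cSeq n a0 a1 e0 μ) (cSeq n a0 a1 e0 μ) ((2 * τ + 1 : ℕ) : ZMod (2 * n)) +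
        binCorr (2 * n) (dSeq n a2 a3 e1 e2 μ) (dSeq n a2 a3 e1 e2 μ)
          ((2 * τ + 1 : ℕ) : ZMod (2 * n)) =
      (-1) ^ e0.val * (binCorr n a0 a1 (τ + μ) + binCorr n a1 a0 (τ + μ) +
        (-1) ^ (e0 + e1 + e2).val * (binCorr n a2 a3 (τ + μ) + binCorr n a3 a2 (τ + μ))) := by
  have hshift : (τ : ZMod n) + 1 - μ = τ + μ := by linear_combination -hμ
  simp only [cSeq, dSeq, binCorr_interleaveSeq_two_mul_add_one, binCorr_const_add_left,
    binCorr_const_add_right, binCorr_comp_add_left, binCorr_comp_add_right, hshift,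
    neg_one_pow_val_add]
  linear_combination -(-1) ^ e1.val * (-1) ^ e2.val *
    (binCorr n a2 a3 (τ + μ) + binCorr n a3 a2 (τ + μ)) * neg_one_pow_mul_self e0.val

lemma binCorr_cSeq_dSeq_sub_two_mul_add_one (hμ : μ + μ = 1) :
    binCorr (2 * n) (cSeq n a0 a1 e0 μ) (dSeq n a2 a3 e1 e2 μ) ((2 * τ + 1 : ℕ) : ZMod (2 * n)) -
        binCorr (2 * n) (dSeq n a2 a3 e1 e2 μ) (cSeq n a0 a1 e0 μ)
          ((2 * τ + 1 : ℕ) : ZMod (2 * n)) =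
      (-1) ^ e2.val * (binCorr n a0 a3 (τ + μ) - binCorr n a3 a0 (τ + μ) +
        (-1) ^ (e0 + e1 + e2).val * (binCorr n a1 a2 (τ + μ) - binCorr n a2 a1 (τ + μ))) := by
  have hshift : (τ : ZMod n) + 1 - μ = τ + μ := by linear_combination -hμ
  simp only [cSeq, dSeq, binCorr_interleaveSeq_two_mul_add_one, binCorr_const_add_left,
    binCorr_const_add_right, binCorr_comp_add_left, binCorr_comp_add_right, hshift,
    neg_one_pow_val_add]
  linear_combination -(-1) ^ e0.val * (-1) ^ e1.val *
    (binCorr n a1 a2 (τ + μ) - binCorr n a2 a1 (τ + μ)) * neg_one_pow_mul_self e2.val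

end ConstructionI

lemma neg_one_pow_mul_mem (k : ℕ) {K : ℤ} (hK : K ∈ ({0, 4, -4} : Set ℤ)) :
    (-1) ^ k * K ∈ ({0, 4, -4} : Set ℤ) := by
  rcases neg_one_pow_eq_or ℤ k with h | h <;> rcases hK with rfl | rfl | rfl <;> simp [h]

lemma add_I_mul_div_two_mem {A B : ℤ} (hA : A ∈ ({0, 4, -4} : Set ℤ)) (hB : B = 0) :
    ((A : ℂ) + Complex.I * (B : ℂ)) / 2 ∈ ({0, 2, -2} : Set ℂ) := by
  subst hB
  rcases hA with rfl | rfl | rfl <;> norm_num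

theorem stmt8 (n : ℕ) (hn : Odd n) (a0 a1 a2 a3 : ZMod n → ZMod 2) (e0 e1 e2 : ZMod 2)
    (u : ZMod (2 * n) → ZMod 4) (hu : u = constructionI n a0 a1 a2 a3 e0 e1 e2)
    (h1 : ∀ τ0 : ℕ, 1 ≤ τ0 → τ0 < n →
      binCorr n a0 a0 (τ0 : ZMod n) + binCorr n a1 a1 (τ0 : ZMod n) +
          binCorr n a2 a2 (τ0 : ZMod n) + binCorr n a3 a3 (τ0 : ZMod n) ∈
        ({0, 4, -4} : Set ℤ))
    (h2 : ∀ τ0 : ℕ, 1 ≤ τ0 → τ0 < n →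
      binCorr n a0 a2 (τ0 : ZMod n) - binCorr n a2 a0 (τ0 : ZMod n) +
          (-1 : ℤ) ^ (e0 + e1 + e2).val *
            (binCorr n a1 a3 (τ0 : ZMod n) - binCorr n a3 a1 (τ0 : ZMod n)) = 0)
    (h3 : ∀ τ0 : ℕ, τ0 < n →
      binCorr n a0 a1 (τ0 : ZMod n) + binCorr n a1 a0 (τ0 : ZMod n) +
          (-1 : ℤ) ^ (e0 + e1 + e2).val *
            (binCorr n a2 a3 (τ0 : ZMod n) + binCorr n a3 a2 (τ0 : ZMod n)) ∈
        ({0, 4, -4} : Set ℤ))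
    (h4 : ∀ τ0 : ℕ, τ0 < n →
      binCorr n a0 a3 (τ0 : ZMod n) - binCorr n a3 a0 (τ0 : ZMod n) +
          (-1 : ℤ) ^ (e0 + e1 + e2).val *
            (binCorr n a1 a2 (τ0 : ZMod n) - binCorr n a2 a1 (τ0 : ZMod n)) = 0) :
    ∀ τ : ℕ, 1 ≤ τ → τ < 2 * n →
      quadCorr (2 * n) u u ((τ : ℕ) : ZMod (2 * n)) ∈ ({0, 2, -2} : Set ℂ) := by
  have : NeZero n := ⟨hn.pos.ne'⟩
  have hlam := natCast_half_succ_add_self hn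
  intro τ hτ1 hτ2
  rw [hu, constructionI_eq_grayInv, quadCorr_grayInv]
  obtain ⟨τ0, rfl | rfl⟩ := Nat.even_or_odd' τ
  · refine add_I_mul_div_two_mem ?_ ?_
    · rw [binCorr_cSeq_add_binCorr_dSeq_two_mul]
      exact h1 τ0 (by omega) (by omega)
    · rw [binCorr_cSeq_dSeq_sub_two_mul, h2 τ0 (by omega) (by omega), mul_zero]
  · set t : ZMod n := τ0 + ((n + 1) / 2 : ℕ)
    have h3t := h3 t.val t.val_lt
    have h4t := h4 t.val t.val_lt
    rw [ZMod.natCast_zmod_val] at h3t h4t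
    refine add_I_mul_div_two_mem ?_ ?_
    · rw [binCorr_cSeq_add_binCorr_dSeq_two_mul_add_one (hμ := hlam)]
      exact neg_one_pow_mul_mem _ h3t
    · rw [binCorr_cSeq_dSeq_sub_two_mul_add_one (hμ := hlam), h4t, mul_zero]
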